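/- arXiv:2204.04970 — 5 statements merged into one kernel-verified Lean document; each statement's English description precedes it below -/
import Mathlib

section
/- Let X be a nonempty set, let f : X → ℝ be bounded, and set c_* = inf_{x ∈ X} f(x). Then the supremum, over all pairs (c, g) with c ∈ ℝ and g : X → ℝ bounded with g(x) ≥ 0 for all x, of the quantity c - sup_{x ∈ X} |f(x) - c - g(x)|, equals c_*; moreover the supremum is attained at the pair (c_*, f - c_*). -/
open scoped BigOperators

/-- For a nonempty set `X` and a bounded `f : X → ℝ` with `c_* = inf_x f x`,
the supremum over all `c ∈ ℝ` and bounded `g ≥ 0` of `c - sup_x |f x - c - g x|` equals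
`c_*`, and it is attained at the pair `(c_*, f - c_*)`. -/
theorem stmt_1 {X : Type*} [Nonempty X] (f : X → ℝ)
    (hf_above : BddAbove (Set.range f)) (hf_below : BddBelow (Set.range f)) :
    IsGreatest
      {v : ℝ | ∃ (c : ℝ) (g : X → ℝ), (∀ x, 0 ≤ g x) ∧ BddAbove (Set.range g) ∧
        v = c - (⨆ x, |f x - c - g x|)}
      (⨅ x, f x) ∧
    (⨅ x, f x) =
      (⨅ x, f x) - (⨆ x, |f x - (⨅ y, f y) - (f x - ⨅ y, f y)|) := by
  set c0 : ℝ := ⨅ x, f x with hc0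
  have hle : ∀ x, c0 ≤ f x := fun x => ciInf_le hf_below x
  have hzero : (⨆ x, |f x - c0 - (f x - c0)|) = 0 := by
    have : (fun x : X => |f x - c0 - (f x - c0)|) = fun _ => (0 : ℝ) := by
      funext x; simp
    rw [this, ciSup_const]
  have heq : c0 = c0 - (⨆ x, |f x - c0 - (f x - c0)|) := by rw [hzero]; ring
  refine ⟨⟨⟨c0, fun x => f x - c0, fun x => sub_nonneg.mpr (hle x), ?_, heq⟩, ?_⟩, heq⟩
  · obtain ⟨M, hM⟩ := hf_above
    exact ⟨M - c0, by rintro y ⟨x, rfl⟩; exact sub_le_sub_right (hM ⟨x, rfl⟩) c0⟩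
  · rintro v ⟨c, g, hg0, ⟨Mg, hMg⟩, rfl⟩
    obtain ⟨M, hM⟩ := hf_above
    obtain ⟨m, hm⟩ := hf_below
    have hbdd : BddAbove (Set.range fun x => |f x - c - g x|) := by
      refine ⟨max (M - c) (c + Mg - m), ?_⟩
      rintro y ⟨x, rfl⟩
      rw [abs_le]
      constructor
      · have h1 : g x ≤ Mg := hMg ⟨x, rfl⟩
        have h2 : m ≤ f x := hm ⟨x, rfl⟩
        have : -(c + Mg - m) ≤ f x - c - g x := by linarith
        exact le_trans (neg_le_neg (le_max_right _ _)) this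
      · have h1 : f x ≤ M := hM ⟨x, rfl⟩
        have h2 : 0 ≤ g x := hg0 x
        exact le_trans (by linarith) (le_max_left (M - c) (c + Mg - m))
    refine le_ciInf fun x => ?_
    have h1 : c - f x ≤ |f x - c - g x| := by
      have := hg0 x
      have habs : -(f x - c - g x) ≤ |f x - c - g x| := neg_le_abs _
      linarith
    have h2 : |f x - c - g x| ≤ ⨆ x, |f x - c - g x| := le_ciSup hbdd x
    linarith
end

section
/- Let X be a nonempty set, let f : X → ℝ be bounded, and set c_* = inf_{x ∈ X} f(x). Let N be a map assigning to real-valued functions on X a real number, satisfying |u(x)| ≤ N(u) for every x ∈ X and every function u in its domain (which contains f - c - g for all c ∈ ℝ, g ∈ G, and f - c_* - g for all g ∈ G). Let G be a nonempty set of functions X → ℝ with g(x) ≥ 0 for all g ∈ G and x ∈ X. Define c̄ = sup_{c ∈ ℝ, g ∈ G} [c - N(f - c - g)] and q = inf_{g ∈ G} N(f - c_* - g). Then c_* - q ≤ c̄ ≤ c_*. -/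
open scoped BigOperators

/-- Theorem 2 of the paper: for a nonempty set `X`, a bounded `f : X → ℝ`
with `c_* = inf_x f x`, a functional `N` dominating the sup norm on the relevant
functions, and a nonempty class `G` of nonnegative functions,
the relaxed value `c̄ = sup_{c, g ∈ G} (c - N (f - c - g))` satisfies
`c_* - q ≤ c̄ ≤ c_*` with `q = inf_{g ∈ G} N (f - c_* - g)`. -/
theorem stmt_3 {X : Type*} [Nonempty X] (f : X → ℝ)
    (hf_above : BddAbove (Set.range f)) (hf_below : BddBelow (Set.range f))
    (N : (X → ℝ) → ℝ) (G : Set (X → ℝ)) (hG : G.Nonempty)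
    (hGpos : ∀ g ∈ G, ∀ x, 0 ≤ g x)
    (hN : ∀ (c : ℝ), ∀ g ∈ G, ∀ x : X, |f x - c - g x| ≤ N (fun y => f y - c - g y)) :
    (⨅ x, f x) - sInf {v : ℝ | ∃ g ∈ G, v = N (fun y => f y - (⨅ x, f x) - g y)} ≤
        sSup {v : ℝ | ∃ (c : ℝ), ∃ g ∈ G, v = c - N (fun y => f y - c - g y)} ∧
      sSup {v : ℝ | ∃ (c : ℝ), ∃ g ∈ G, v = c - N (fun y => f y - c - g y)} ≤ ⨅ x, f x := by
  set cs := ⨅ x, f x with hcs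
  set S := {v : ℝ | ∃ (c : ℝ), ∃ g ∈ G, v = c - N (fun y => f y - c - g y)} with hS
  -- every element of S is ≤ cs
  have hub : ∀ v ∈ S, v ≤ cs := by
    rintro v ⟨c, g, hg, rfl⟩
    refine le_ciInf fun x => ?_
    have h1 := hN c g hg x
    have h2' : c + g x - f x ≤ N (fun y => f y - c - g y) := by
      refine le_trans ?_ h1
      have he : f x - c - g x = -(c + g x - f x) := by ring
      rw [he, abs_neg]
      exact le_abs_self _
    have hgx := hGpos g hg x
    linarith
  have hSne : S.Nonempty := by
    obtain ⟨g, hg⟩ := hG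
    exact ⟨_, 0, g, hg, rfl⟩
  have hSbdd : BddAbove S := ⟨cs, hub⟩
  constructor
  · -- cs - sInf Q ≤ sSup S
    have h : ∀ v ∈ {v : ℝ | ∃ g ∈ G, v = N (fun y => f y - cs - g y)},
        cs - sSup S ≤ v := by
      rintro v ⟨g, hg, rfl⟩
      have : cs - N (fun y => f y - cs - g y) ≤ sSup S :=
        le_csSup hSbdd ⟨cs, g, hg, rfl⟩
      linarith
    obtain ⟨g, hg⟩ := hG
    have hne : {v : ℝ | ∃ g ∈ G, v = N (fun y => f y - cs - g y)}.Nonempty :=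
      ⟨_, g, hg, rfl⟩
    have := le_csInf hne h
    linarith
  · exact csSup_le hSne hub
end

section
/- Let d, m ∈ ℕ with d ≥ 1, and let f : ℝ^d → ℝ be a 1-periodic, (m+2)-times continuously differentiable, nonnegative function. Assume the set of global minimizers of f contained in [0,1)^d is finite, and that at each such minimizer the Hessian of f is positive definite. Then there exist Q ∈ ℕ and 1-periodic, m-times continuously differentiable functions z₁, …, z_Q : ℝ^d → ℝ such that f(x) = ∑_{j=1}^Q z_j(x)² for all x ∈ ℝ^d. -/
/-!
Near a zero `p` of `f` with positive definite Hessian, Taylor's formula with integral remainder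
writes `f x = (x - p) ⬝ᵥ B x *ᵥ (x - p)` with a `C^m` matrix field `B` that stays positive
definite near `p`; a Cholesky factorisation `B = Lᵀ L` with `C^m` entries then writes `f` as a sum
of `d` squares on a ball around `p`. Cutting these squares off by a bump function and transporting
them to every cell `p + ℤ^d` gives periodic `C^m` functions `χ_p`, `h_{p,i}` with
`∑ᵢ h_{p,i}² = χ_p² f` and `χ_p = 1` near `p + ℤ^d`. Finally `a = ∏ₚ (1 - χ_p)` vanishes near
every zero of `f`, so `a √f` is `C^m`, and with `D = a² + ∑ₚ χ_p² > 0`,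
`f = (a √f / √D)² + ∑_{p,i} (h_{p,i} / √D)²`.
-/

open scoped BigOperators

/-- `u` is `1`-periodic: `u (x + k) = u x` for all `x ∈ ℝ^d`, `k ∈ ℤ^d`. -/
def ZdPeriodic {α : Type*} (d : ℕ) (u : (Fin d → ℝ) → α) : Prop :=
  ∀ (x : Fin d → ℝ) (k : Fin d → ℤ), u (fun j => x j + (k j : ℝ)) = u x

/-- The set of global minimizers of `f` lying in `[0,1)^d`. -/
def globalMinimizersIco (d : ℕ) (f : (Fin d → ℝ) → ℝ) : Set (Fin d → ℝ) :=
  {x | (∀ j, x j ∈ Set.Ico (0 : ℝ) 1) ∧ ∀ y, f x ≤ f y}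

open Set Metric Filter Topology Matrix

theorem hasFDerivAt_intervalIntegral_of_contDiff {E F : Type*} [NormedAddCommGroup E]
    [NormedSpace ℝ E] [ProperSpace E] [NormedAddCommGroup F] [NormedSpace ℝ F]
    {H : E × ℝ → F} (hH : ContDiff ℝ 1 H) (a b : ℝ) (x₀ : E) :
    HasFDerivAt (fun x => ∫ t in a..b, H (x, t))
      (∫ t in a..b, fderiv ℝ H (x₀, t) ∘L ContinuousLinearMap.inl ℝ E ℝ) x₀ := by
  set G : E × ℝ → E →L[ℝ] F := fun z => fderiv ℝ H z ∘L ContinuousLinearMap.inl ℝ E ℝ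
  have hG : Continuous G := (hH.continuous_fderiv one_ne_zero).clm_comp continuous_const
  have hHt : ∀ t x, HasFDerivAt (fun x => H (x, t)) (G (x, t)) x := fun t x =>
    ((hH.differentiable one_ne_zero) (x, t)).hasFDerivAt.comp x
      ((hasFDerivAt_id x).prodMk (hasFDerivAt_const t x))
  obtain ⟨C, hC⟩ : ∃ C, ∀ z ∈ closedBall x₀ 1 ×ˢ uIcc a b, ‖G z‖ ≤ C :=
    ((isCompact_closedBall x₀ 1).prod isCompact_uIcc).exists_bound_of_continuousOn hG.continuousOn
  have hHs : ∀ x, Continuous fun t => H (x, t) := fun x => hH.continuous.comp (by fun_prop)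
  have hGs : ∀ x, Continuous fun t => G (x, t) := fun x => hG.comp (by fun_prop)
  exact intervalIntegral.hasFDerivAt_integral_of_dominated_of_fderiv_le (ball_mem_nhds x₀ one_pos)
    (.of_forall fun x => (hHs x).aestronglyMeasurable)
    ((hHs x₀).intervalIntegrable a b) (hGs x₀).aestronglyMeasurable
    (.of_forall fun t ht x hx => hC (x, t) ⟨ball_subset_closedBall hx, uIoc_subset_uIcc ht⟩)
    intervalIntegrable_const (.of_forall fun t _ x _ => hHt t x)

universe u

theorem contDiff_intervalIntegral_of_contDiff {E F : Type u} [NormedAddCommGroup E]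
    [NormedSpace ℝ E] [ProperSpace E] [NormedAddCommGroup F] [NormedSpace ℝ F]
    {n : ℕ} {H : E × ℝ → F} (hH : ContDiff ℝ n H) (a b : ℝ) :
    ContDiff ℝ n fun x => ∫ t in a..b, H (x, t) := by
  induction n generalizing F with
  | zero =>
    rw [Nat.cast_zero, contDiff_zero] at hH ⊢
    exact intervalIntegral.continuous_parametric_intervalIntegral_of_continuous'
      (f := fun x t => H (x, t)) hH a b
  | succ n ih =>
    have hH1 : ContDiff ℝ 1 H := hH.of_le (by exact_mod_cast n.succ_pos)
    rw [Nat.cast_succ, contDiff_succ_iff_fderiv] at hH ⊢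
    refine ⟨fun x => (hasFDerivAt_intervalIntegral_of_contDiff hH1 a b x).differentiableAt,
      by simp, ?_⟩
    rw [funext fun x => (hasFDerivAt_intervalIntegral_of_contDiff hH1 a b x).fderiv]
    exact ih (hH.2.2.clm_comp contDiff_const)

theorem exists_contDiff_bilinear_eq_of_fderiv_eq_zero {E : Type u} [NormedAddCommGroup E]
    [NormedSpace ℝ E] [ProperSpace E] {m : ℕ} {f : E → ℝ} (hf : ContDiff ℝ (m + 2 : ℕ) f)
    {p : E} (hfp : f p = 0) (hdf : fderiv ℝ f p = 0) :
    ∃ G : E → E →L[ℝ] E →L[ℝ] ℝ, ContDiff ℝ m G ∧ (∀ x u v, G x u v = G x v u) ∧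
      (∀ v, 2 * G p v v = iteratedFDeriv ℝ 2 f p fun _ => v) ∧
      ∀ x, f x = G x (x - p) (x - p) := by
  set D2 := fderiv ℝ (fderiv ℝ f)
  -- instance search misses this one
  have : IsBoundedSMul ℝ (E →L[ℝ] E →L[ℝ] ℝ) := by
    exact NormedSpace.toIsBoundedSMul (𝕜 := ℝ) (E := E →L[ℝ] E →L[ℝ] ℝ)
  have hD2 : ContDiff ℝ m D2 :=
    (hf.fderiv_right (m := m + 1) (by push_cast; exact le_rfl)).fderiv_right le_rfl
  set H : E × ℝ → E →L[ℝ] E →L[ℝ] ℝ := fun z => (1 - z.2) • D2 (p + z.2 • (z.1 - p))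
  have hH : ContDiff ℝ m H := (contDiff_const.sub contDiff_snd).smul
    (hD2.comp (contDiff_const.add (contDiff_snd.smul (contDiff_fst.sub contDiff_const))))
  set G : E → E →L[ℝ] E →L[ℝ] ℝ := fun x => ∫ t in (0 : ℝ)..1, H (x, t)
  have hG_apply : ∀ x u v, G x u v = ∫ t in (0 : ℝ)..1, (1 - t) * D2 (p + t • (x - p)) u v := by
    intro x u v
    have hcont : Continuous fun t => H (x, t) := hH.continuous.comp (by fun_prop)
    rw [ContinuousLinearMap.intervalIntegral_apply (hcont.intervalIntegrable 0 1),
      ContinuousLinearMap.intervalIntegral_apply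
        ((hcont.clm_apply continuous_const).intervalIntegrable 0 1)]
    rfl
  have hsymm : ∀ y u v, D2 y u v = D2 y v u := fun y =>
    hf.contDiffAt.isSymmSndFDerivAt (by simp [minSmoothness_of_isRCLikeNormedField])
  have hweight : ∫ t in (0 : ℝ)..1, (1 - t) = 1 / 2 := by
    rw [intervalIntegral.integral_sub intervalIntegrable_const
      intervalIntegral.intervalIntegrable_id]
    norm_num [integral_id]
  refine ⟨G, contDiff_intervalIntegral_of_contDiff hH 0 1, fun x u v => ?_, fun v => ?_,
    fun x => ?_⟩
  · simp only [hG_apply, hsymm _ u v]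
  · simp [hG_apply, iteratedFDeriv_two_apply, D2, hweight]
  · have htaylor := map_add_eq_sum_add_integral_iteratedFDeriv (n := 1) (x := p) (y := x - p)
      fun t _ => (hf.of_le (by exact_mod_cast (by omega : 1 + 1 ≤ m + 2))).contDiffAt
    simpa [Finset.sum_range_succ, hfp, hdf, iteratedFDeriv_two_apply, hG_apply, -map_sub]
      using htaylor

theorem eventually_forall_dotProduct_mulVec_pos {X ι : Type*} [TopologicalSpace X] [Fintype ι]
    {B : X → Matrix ι ι ℝ} (hB : Continuous B) {x₀ : X}
    (h₀ : ∀ v : ι → ℝ, v ≠ 0 → 0 < v ⬝ᵥ B x₀ *ᵥ v) :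
    ∀ᶠ x in 𝓝 x₀, ∀ v : ι → ℝ, v ≠ 0 → 0 < v ⬝ᵥ B x *ᵥ v := by
  have hΦ : Continuous fun z : X × (ι → ℝ) => z.2 ⬝ᵥ B z.1 *ᵥ z.2 := by fun_prop
  have hsphere : ∀ᶠ x in 𝓝 x₀, ∀ v ∈ sphere (0 : ι → ℝ) 1, 0 < v ⬝ᵥ B x *ᵥ v :=
    (isCompact_sphere 0 1).eventually_forall_of_forall_eventually fun v hv =>
      continuousAt_const.eventually_lt hΦ.continuousAt (h₀ v (ne_zero_of_mem_unit_sphere ⟨v, hv⟩))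
  filter_upwards [hsphere] with x hx v hv
  have hv' : 0 < ‖v‖ := norm_pos_iff.2 hv
  have := hx (‖v‖⁻¹ • v) (by simp [norm_smul, hv'.ne'])
  simp only [mulVec_smul, dotProduct_smul, smul_dotProduct, smul_eq_mul] at this
  exact pos_of_mul_pos_right (pos_of_mul_pos_right this (by positivity)) (by positivity)

section Cholesky

variable {n : ℕ}

noncomputable def pivotSchurComplement (M : Matrix (Fin (n + 1)) (Fin (n + 1)) ℝ) :
    Matrix (Fin n) (Fin n) ℝ :=
  of fun i j => M i.succ j.succ - M 0 i.succ * M 0 j.succ / M 0 0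

noncomputable def choleskyStep (M : Matrix (Fin (n + 1)) (Fin (n + 1)) ℝ)
    (L : Matrix (Fin n) (Fin n) ℝ) : Matrix (Fin (n + 1)) (Fin (n + 1)) ℝ :=
  of (Fin.cons (fun j => M 0 j / √(M 0 0)) fun k => Fin.cons 0 (L k))

variable {M : Matrix (Fin (n + 1)) (Fin (n + 1)) ℝ}

theorem Matrix.IsSymm.pivotSchurComplement (hM : M.IsSymm) : (pivotSchurComplement M).IsSymm :=
  IsSymm.ext fun i j => by simp only [_root_.pivotSchurComplement, of_apply, hM.apply]; ring

theorem pivot_pos_of_dotProduct_mulVec_pos (hM : ∀ v : Fin (n + 1) → ℝ, v ≠ 0 → 0 < v ⬝ᵥ M *ᵥ v) :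
    0 < M 0 0 := by
  simpa using hM (Pi.single 0 1) (by simp)

theorem dotProduct_mulVec_pivotSchurComplement_pos (hM : M.IsSymm)
    (hpos : ∀ v : Fin (n + 1) → ℝ, v ≠ 0 → 0 < v ⬝ᵥ M *ᵥ v) (w : Fin n → ℝ) (hw : w ≠ 0) :
    0 < w ⬝ᵥ pivotSchurComplement M *ᵥ w := by
  have h00 := pivot_pos_of_dotProduct_mulVec_pos hpos
  set t := ∑ j, M 0 j.succ * w j
  have hrow : ∀ i : Fin n, ∑ j, (M i.succ j.succ - M 0 i.succ * M 0 j.succ / M 0 0) * w j =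
      ∑ j, M i.succ j.succ * w j - M 0 i.succ / M 0 0 * t := fun i => by
    simp only [sub_mul, Finset.sum_sub_distrib, t, Finset.mul_sum]
    exact congrArg _ (Finset.sum_congr rfl fun j _ => by ring)
  have ht : ∑ i, w i * M 0 i.succ = t := Finset.sum_congr rfl fun i _ => mul_comm _ _
  have ht' : ∑ i, w i * (M 0 i.succ / M 0 0) = t / M 0 0 := by
    rw [← ht, Finset.sum_div]
    exact Finset.sum_congr rfl fun i _ => (mul_div_assoc _ _ _).symm
  -- the first coordinate `-t / M 0 0` minimizes the quadratic form with tail `w`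
  have key : (Fin.cons (-t / M 0 0) w : Fin (n + 1) → ℝ) ⬝ᵥ M *ᵥ Fin.cons (-t / M 0 0) w =
      w ⬝ᵥ pivotSchurComplement M *ᵥ w := by
    simp only [dotProduct, mulVec, Fin.sum_univ_succ, Fin.cons_zero, Fin.cons_succ,
      pivotSchurComplement, of_apply, fun i : Fin n => hM.apply 0 i.succ, hrow, mul_add, mul_sub,
      Finset.sum_add_distrib, Finset.sum_sub_distrib, ← mul_assoc, ← Finset.sum_mul, ht, ht']
    field_simp
    ring
  rw [← key]
  exact hpos _ fun h => hw (funext fun i => by simpa using congrFun h i.succ)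

theorem eq_transpose_mul_choleskyStep (hM : M.IsSymm) (h00 : 0 < M 0 0)
    {L : Matrix (Fin n) (Fin n) ℝ} (hL : pivotSchurComplement M = Lᵀ * L) :
    M = (choleskyStep M L)ᵀ * choleskyStep M L := by
  have hentry : ∀ a b, a / √(M 0 0) * (b / √(M 0 0)) = a * b / M 0 0 := fun a b => by
    rw [div_mul_div_comm, Real.mul_self_sqrt h00.le]
  have hL' : ∀ i j, M i.succ j.succ = M 0 i.succ * M 0 j.succ / M 0 0 + ∑ k, L k i * L k j :=
    fun i j => by
      have := congrFun (congrFun hL i) j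
      simp only [pivotSchurComplement, of_apply, mul_apply, transpose_apply] at this
      linarith
  refine Matrix.ext fun i j => ?_
  refine Fin.cases ?_ (fun i => ?_) i <;> refine Fin.cases ?_ (fun j => ?_) j <;>
    simp only [choleskyStep, mul_apply, transpose_apply, of_apply, Fin.sum_univ_succ, Fin.cons_zero,
      Fin.cons_succ, mul_zero, zero_mul, Finset.sum_const_zero, add_zero, hentry, hL']
  all_goals field_simp
  rw [hM.apply]

theorem exists_contDiffOn_cholesky {E : Type*} [NormedAddCommGroup E] [NormedSpace ℝ E]
    {k : WithTop ℕ∞} {U : Set E} :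
    ∀ {n : ℕ} {B : E → Matrix (Fin n) (Fin n) ℝ}, (∀ i j, ContDiffOn ℝ k (fun x => B x i j) U) →
      (∀ x ∈ U, (B x).IsSymm) → (∀ x ∈ U, ∀ v : Fin n → ℝ, v ≠ 0 → 0 < v ⬝ᵥ B x *ᵥ v) →
      ∃ L : E → Matrix (Fin n) (Fin n) ℝ, (∀ i j, ContDiffOn ℝ k (fun x => L x i j) U) ∧
        ∀ x ∈ U, B x = (L x)ᵀ * L x
  | 0, _, _, _, _ => ⟨0, fun i => i.elim0, fun _ _ => Subsingleton.elim _ _⟩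
  | n + 1, B, hB, hsymm, hpos => by
    have h00 : ∀ x ∈ U, 0 < B x 0 0 := fun x hx => pivot_pos_of_dotProduct_mulVec_pos (hpos x hx)
    obtain ⟨L, hL, hBL⟩ := exists_contDiffOn_cholesky (B := fun x => pivotSchurComplement (B x))
      (fun i j => (hB _ _).sub (((hB 0 _).mul (hB 0 _)).div (hB 0 0) fun x hx => (h00 x hx).ne'))
      (fun x hx => (hsymm x hx).pivotSchurComplement)
      (fun x hx => dotProduct_mulVec_pivotSchurComplement_pos (hsymm x hx) (hpos x hx))
    refine ⟨fun x => choleskyStep (B x) (L x), fun i j => ?_, fun x hx =>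
      eq_transpose_mul_choleskyStep (hsymm x hx) (h00 x hx) (hBL x hx)⟩
    refine Fin.cases ?_ (fun i => ?_) i
    · exact (hB 0 j).div ((hB 0 0).sqrt fun x hx => (h00 x hx).ne') fun x hx =>
        (Real.sqrt_pos.2 (h00 x hx)).ne'
    · refine Fin.cases contDiffOn_const (fun j => ?_) j
      simpa [choleskyStep] using hL i j

end Cholesky

theorem ContinuousLinearMap.apply_apply_eq_dotProduct_mulVec {ι : Type*} [Fintype ι] [DecidableEq ι]
    (B : (ι → ℝ) →L[ℝ] (ι → ℝ) →L[ℝ] ℝ) (u v : ι → ℝ) :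
    B u v = u ⬝ᵥ (of fun i j => B (Pi.single i 1) (Pi.single j 1)) *ᵥ v := by
  have hexp : ∀ w : ι → ℝ, w = ∑ i, w i • (Pi.single i 1 : ι → ℝ) := fun w => by
    simp [← Pi.single_smul', Finset.univ_sum_single]
  conv_lhs => rw [hexp u, hexp v]
  simp only [map_sum, map_smul, FunLike.coe_sum, FunLike.coe_smul, Finset.sum_apply, Pi.smul_apply,
    smul_eq_mul, dotProduct, mulVec, of_apply, Finset.mul_sum]
  rw [Finset.sum_comm]
  exact Finset.sum_congr rfl fun i _ => Finset.sum_congr rfl fun j _ => by ring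

theorem dotProduct_transpose_mul_mulVec {ι : Type*} [Fintype ι] (L : Matrix ι ι ℝ) (v : ι → ℝ) :
    v ⬝ᵥ (Lᵀ * L) *ᵥ v = ∑ i, (L *ᵥ v) i ^ 2 := by
  rw [← mulVec_mulVec, dotProduct_mulVec, vecMul_transpose]
  simp only [dotProduct, sq]

theorem exists_sum_sq_on_ball_of_hessian_pos {d m : ℕ} {f : (Fin d → ℝ) → ℝ}
    (hf : ContDiff ℝ (m + 2 : ℕ) f) {p : Fin d → ℝ} (hfp : f p = 0) (hdf : fderiv ℝ f p = 0)
    (hpd : ∀ v : Fin d → ℝ, v ≠ 0 → 0 < iteratedFDeriv ℝ 2 f p fun _ => v) :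
    ∃ r > 0, ∃ w : Fin d → (Fin d → ℝ) → ℝ,
      (∀ i, ContDiffOn ℝ m (w i) (ball p r)) ∧ ∀ x ∈ ball p r, f x = ∑ i, w i x ^ 2 := by
  obtain ⟨G, hG, hGsymm, hGp, hfG⟩ := exists_contDiff_bilinear_eq_of_fderiv_eq_zero hf hfp hdf
  set B : (Fin d → ℝ) → Matrix (Fin d) (Fin d) ℝ :=
    fun x => of fun i j => G x (Pi.single i 1) (Pi.single j 1)
  have hGB : ∀ x u v, G x u v = u ⬝ᵥ B x *ᵥ v := fun x =>
    (G x).apply_apply_eq_dotProduct_mulVec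
  have hB : ∀ i j, ContDiff ℝ m fun x => B x i j := fun i j =>
    (hG.clm_apply contDiff_const).clm_apply contDiff_const
  obtain ⟨r, hr, hpos⟩ := eventually_nhds_iff_ball.1 <|
    eventually_forall_dotProduct_mulVec_pos (continuous_pi fun i => continuous_pi fun j =>
      (hB i j).continuous) fun v hv => by linarith [hGB p v v, hGp v, hpd v hv]
  obtain ⟨L, hL, hBL⟩ := exists_contDiffOn_cholesky (U := ball p r)
    (fun i j => (hB i j).contDiffOn) (fun x _ => IsSymm.ext fun i j => hGsymm x _ _) hpos
  refine ⟨r, hr, fun i x => (L x *ᵥ (x - p)) i, fun i => ?_, fun x hx => ?_⟩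
  · simp only [mulVec, dotProduct]
    exact ContDiffOn.sum fun j _ =>
      (hL i j).mul ((contDiff_apply ℝ ℝ j).sub contDiff_const).contDiffOn
  · rw [hfG, hGB, hBL x hx, dotProduct_transpose_mul_mulVec]

section Periodization

variable {ι : Type*}

noncomputable def cellRep (p x : ι → ℝ) : ι → ℝ := fun j => x j - round (x j - p j)

theorem cellRep_add_intCast (p x : ι → ℝ) (k : ι → ℤ) :
    cellRep p (fun j => x j + k j) = cellRep p x := by
  funext j
  simp only [cellRep, add_sub_right_comm _ (k j : ℝ), round_add_intCast, Int.cast_add]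
  ring

theorem cellRep_eq_sub_of_dist_lt [Fintype ι] {p x : ι → ℝ} {k : ι → ℤ}
    (h : dist x (fun j => p j + k j) < 1 / 2) : cellRep p x = fun j => x j - k j := by
  funext j
  have hj : |x j - p j - k j| < 1 / 2 := by
    have := (dist_le_pi_dist x _ j).trans_lt h
    rwa [Real.dist_eq, sub_add_eq_sub_sub] at this
  rw [cellRep, round_eq, Int.floor_eq_iff.2]
  constructor <;> linarith [abs_lt.1 hj]

theorem ZdPeriodic.comp_cellRep {d : ℕ} {α : Type*} {u : (Fin d → ℝ) → α} (hu : ZdPeriodic d u)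
    (p x : Fin d → ℝ) : u (cellRep p x) = u x := by
  rw [← hu x fun j => -round (x j - p j)]
  simp only [Int.cast_neg, ← sub_eq_add_neg]
  rfl

theorem ZdPeriodic.apply_fract {d : ℕ} {α : Type*} {u : (Fin d → ℝ) → α} (hu : ZdPeriodic d u)
    (x : Fin d → ℝ) : u (fun j => Int.fract (x j)) = u x := by
  rw [← hu (fun j => Int.fract (x j)) fun j => ⌊x j⌋]
  simp only [Int.fract_add_floor]

theorem zdPeriodic_comp_cellRep {d : ℕ} {α : Type*} (G : (Fin d → ℝ) → α) (p : Fin d → ℝ) :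
    ZdPeriodic d fun x => G (cellRep p x) := fun x k => by
  simp only [cellRep_add_intCast]

theorem lt_abs_sub_round_of_round_ne {ρ s s₀ : ℝ} (hs : |s - s₀| < 1 / 2 - ρ)
    (hne : round s ≠ round s₀) : ρ < |s - round s| ∧ ρ < |s - round s₀| := by
  have hN : (1 : ℝ) ≤ |(round s : ℝ) - round s₀| := by
    exact_mod_cast Int.one_le_abs (sub_ne_zero.2 hne)
  have h₁ := abs_sub_round s
  have h₂ := abs_sub_round s₀
  have h₃ := abs_add_three (s - s₀) (s₀ - round s₀) (-(s - round s))
  have h₄ := abs_sub (s - round s₀) (s - round s)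
  rw [abs_neg, show s - s₀ + (s₀ - round s₀) + -(s - round s) = round s - round s₀ by ring] at h₃
  rw [show s - round s₀ - (s - round s) = round s - round s₀ by ring] at h₄
  constructor <;> linarith [abs_nonneg (s - s₀)]

theorem contDiff_comp_cellRep [Fintype ι] {F : Type*} [NormedAddCommGroup F] [NormedSpace ℝ F]
    {n : WithTop ℕ∞} {G : (ι → ℝ) → F} {p : ι → ℝ} {ρ : ℝ} (hρ : ρ < 1 / 2)
    (hG : ContDiff ℝ n G) (hsupp : ∀ x, ρ ≤ dist x p → G x = 0) :
    ContDiff ℝ n fun x => G (cellRep p x) := by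
  refine contDiff_iff_contDiffAt.2 fun x₀ => ?_
  set c : ι → ℝ := fun j => round (x₀ j - p j)
  -- where the rounding jumps near `x₀`, both arguments of `G` below are `ρ`-far from `p`
  suffices (fun x => G (cellRep p x)) =ᶠ[𝓝 x₀] fun x => G (x - c) from
    (hG.comp (contDiff_id.sub contDiff_const)).contDiffAt.congr_of_eventuallyEq this
  filter_upwards [ball_mem_nhds x₀ (sub_pos.2 hρ)] with x hx
  by_cases hround : ∀ j, round (x j - p j) = round (x₀ j - p j)
  · congr 1
    funext j
    simp [cellRep, c, hround j]
  push Not at hround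
  obtain ⟨j, hj⟩ := hround
  have hs : |(x j - p j) - (x₀ j - p j)| < 1 / 2 - ρ := by
    rw [sub_sub_sub_cancel_right, ← Real.dist_eq]
    exact (dist_le_pi_dist x x₀ j).trans_lt hx
  obtain ⟨h₁, h₂⟩ := lt_abs_sub_round_of_round_ne hs hj
  have hdist : ∀ y : ι → ℝ, |y j - p j| ≤ dist y p := fun y =>
    (Real.dist_eq (y j) (p j)).symm.trans_le (dist_le_pi_dist y p j)
  rw [hsupp _ (h₁.le.trans ?_), hsupp _ (h₂.le.trans ?_)]
  · simpa [c, sub_right_comm] using hdist (x - c)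
  · simpa [cellRep, sub_right_comm] using hdist (cellRep p x)

end Periodization

theorem ContDiffBump.contDiff_mul_of_contDiffOn {E : Type*} [NormedAddCommGroup E]
    [NormedSpace ℝ E] [HasContDiffBump E] {c : E} (η : ContDiffBump c) {n : ℕ∞} {w : E → ℝ}
    {R : ℝ} (hR : η.rOut < R) (hw : ContDiffOn ℝ n w (ball c R)) :
    ContDiff ℝ n fun x => η x * w x := by
  refine contDiff_iff_contDiffAt.2 fun x => ?_
  by_cases hx : x ∈ ball c R
  · exact η.contDiff.contDiffAt.mul (hw.contDiffAt (isOpen_ball.mem_nhds hx))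
  · refine (contDiffAt_const (c := (0 : ℝ))).congr_of_eventuallyEq ?_
    have hout : x ∈ (closedBall c η.rOut)ᶜ := fun h => hx (closedBall_subset_ball hR h)
    filter_upwards [isClosed_closedBall.isOpen_compl.mem_nhds hout] with y hy
    rw [η.zero_of_le_dist (le_of_lt (not_le.1 fun h => hy (mem_closedBall.2 h))), zero_mul]

theorem exists_periodic_localization {d : ℕ} {κ : Type*} [Fintype κ] {n : ℕ∞}
    {f : (Fin d → ℝ) → ℝ} (hf_per : ZdPeriodic d f) {p : Fin d → ℝ} {r : ℝ} (hr : 0 < r)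
    {w : κ → (Fin d → ℝ) → ℝ} (hw : ∀ i, ContDiffOn ℝ n (w i) (ball p r))
    (hfw : ∀ x ∈ ball p r, f x = ∑ i, w i x ^ 2) :
    ∃ (χ : (Fin d → ℝ) → ℝ) (h : κ → (Fin d → ℝ) → ℝ),
      (ZdPeriodic d χ ∧ ContDiff ℝ n χ) ∧ (∀ i, ZdPeriodic d (h i) ∧ ContDiff ℝ n (h i)) ∧
      (∀ x, ∑ i, h i x ^ 2 = χ x ^ 2 * f x) ∧ ∀ k : Fin d → ℤ, χ =ᶠ[𝓝 fun j => p j + k j] 1 := by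
  set ρ := min (r / 2) (1 / 4)
  have hρ : 0 < ρ := lt_min (half_pos hr) (by norm_num)
  have hρr : ρ < r := (min_le_left _ _).trans_lt (half_lt_self hr)
  have hρ2 : ρ < 1 / 2 := (min_le_right _ _).trans_lt (by norm_num)
  let η : ContDiffBump p := ⟨ρ / 2, ρ, half_pos hρ, half_lt_self hρ⟩
  refine ⟨fun x => η (cellRep p x), fun i x => η (cellRep p x) * w i (cellRep p x),
    ⟨zdPeriodic_comp_cellRep _ p, contDiff_comp_cellRep hρ2 η.contDiff fun x => η.zero_of_le_dist⟩,
    fun i => ⟨zdPeriodic_comp_cellRep (fun y => η y * w i y) p, contDiff_comp_cellRep hρ2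
      (η.contDiff_mul_of_contDiffOn hρr (hw i)) fun x hx => by simp [η.zero_of_le_dist hx]⟩,
    fun x => ?_, fun k => ?_⟩
  · rw [← hf_per.comp_cellRep p x]
    by_cases hη : η (cellRep p x) = 0
    · simp [hη]
    have hmem : cellRep p x ∈ ball p r := by
      have : cellRep p x ∈ Function.support η := hη
      rw [η.support_eq] at this
      exact ball_subset_ball hρr.le this
    rw [hfw _ hmem, Finset.mul_sum]
    exact Finset.sum_congr rfl fun i _ => by ring
  · filter_upwards [ball_mem_nhds _ (half_pos hρ)] with y hy
    rw [cellRep_eq_sub_of_dist_lt (hy.trans (by linarith))]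
    have hdist : dist (fun j => y j - k j) p = dist y fun j => p j + k j := by
      rw [dist_eq_norm, dist_eq_norm]
      congr 1
      funext j
      simp only [Pi.sub_apply]
      ring
    exact η.one_of_mem_closedBall (mem_closedBall.2 (hdist.trans_lt (mem_ball.1 hy)).le)

theorem contDiff_mul_sqrt_of_eventually_eq_zero {E : Type*} [NormedAddCommGroup E]
    [NormedSpace ℝ E] {n : WithTop ℕ∞} {a f : E → ℝ} (ha : ContDiff ℝ n a) (hf : ContDiff ℝ n f)
    (hvan : ∀ x, f x = 0 → a =ᶠ[𝓝 x] 0) : ContDiff ℝ n fun x => a x * √(f x) := by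
  refine contDiff_iff_contDiffAt.2 fun x => ?_
  by_cases hx : f x = 0
  · exact (contDiffAt_const (c := (0 : ℝ))).congr_of_eventuallyEq
      ((hvan x hx).mono fun y hy => by simp [hy])
  · exact ha.contDiffAt.mul ((Real.contDiffAt_sqrt hx).comp x hf.contDiffAt)

theorem exists_periodic_sum_sq_of_localized {d : ℕ} {n : WithTop ℕ∞} {ι κ : Type*} [Fintype ι]
    [Fintype κ] {f : (Fin d → ℝ) → ℝ} (hf_per : ZdPeriodic d f) (hf : ContDiff ℝ n f)
    (hf_nonneg : ∀ x, 0 ≤ f x) {χ : ι → (Fin d → ℝ) → ℝ} {h : ι → κ → (Fin d → ℝ) → ℝ}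
    (hχ : ∀ q, ZdPeriodic d (χ q) ∧ ContDiff ℝ n (χ q))
    (hh : ∀ q i, ZdPeriodic d (h q i) ∧ ContDiff ℝ n (h q i))
    (hsum : ∀ q x, ∑ i, h q i x ^ 2 = χ q x ^ 2 * f x)
    (hcover : ∀ x, f x = 0 → ∃ q, χ q =ᶠ[𝓝 x] 1) :
    ∃ (Q : ℕ) (z : Fin Q → (Fin d → ℝ) → ℝ),
      (∀ j, ZdPeriodic d (z j) ∧ ContDiff ℝ n (z j)) ∧ ∀ x, f x = ∑ j, (z j x) ^ 2 := by
  set a : (Fin d → ℝ) → ℝ := fun x => ∏ q, (1 - χ q x)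
  set D : (Fin d → ℝ) → ℝ := fun x => a x ^ 2 + ∑ q, χ q x ^ 2
  have hD_pos : ∀ x, 0 < D x := by
    intro x
    by_cases hχx : ∀ q, χ q x = 0
    · simp [D, a, hχx]
    · obtain ⟨q, hq⟩ := not_forall.1 hχx
      exact add_pos_of_nonneg_of_pos (sq_nonneg _) (Finset.sum_pos' (fun q _ => sq_nonneg _)
        ⟨q, Finset.mem_univ q, by positivity⟩)
  have ha_van : ∀ x, f x = 0 → a =ᶠ[𝓝 x] 0 := fun x hx =>
    let ⟨q, hq⟩ := hcover x hx
    hq.mono fun y hy => Finset.prod_eq_zero (Finset.mem_univ q) (by simp [hy])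
  have ha : ContDiff ℝ n a := contDiff_prod fun q _ => contDiff_const.sub (hχ q).2
  have hsD : ContDiff ℝ n fun x => √(D x) :=
    (ha.pow 2).add (ContDiff.sum fun q _ => (hχ q).2.pow 2) |>.sqrt fun x => (hD_pos x).ne'
  let z : Option (ι × κ) → (Fin d → ℝ) → ℝ := fun o x =>
    o.elim (a x * √(f x)) (fun qi => h qi.1 qi.2 x) / √(D x)
  have hz : ∀ o, ZdPeriodic d (z o) ∧ ContDiff ℝ n (z o) := by
    have hsD0 : ∀ x, √(D x) ≠ 0 := fun x => (Real.sqrt_pos.2 (hD_pos x)).ne'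
    rintro (_ | ⟨q, i⟩)
    · refine ⟨fun x k => ?_, (contDiff_mul_sqrt_of_eventually_eq_zero ha hf ha_van).div hsD hsD0⟩
      simp only [z, a, D, Option.elim, hf_per x k, fun q => (hχ q).1 x k]
    · refine ⟨fun x k => ?_, (hh q i).2.div hsD hsD0⟩
      simp only [z, a, D, Option.elim, (hh q i).1 x k, fun q => (hχ q).1 x k]
  have hfz : ∀ x, f x = ∑ o, z o x ^ 2 := by
    intro x
    simp only [z, Fintype.sum_option, Fintype.sum_prod_type, Option.elim, div_pow, mul_pow,
      Real.sq_sqrt (hf_nonneg x), Real.sq_sqrt (hD_pos x).le, ← Finset.sum_div, hsum]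
    field_simp [(hD_pos x).ne']
    simp only [D, mul_add, Finset.mul_sum]
  exact ⟨_, z ∘ (Fintype.equivFin _).symm, fun j => hz _, fun x => by
    rw [hfz x]; exact (Equiv.sum_comp _ fun o => z o x ^ 2).symm⟩

theorem stmt_9_general (d m : ℕ) (f : (Fin d → ℝ) → ℝ)
    (hf_per : ZdPeriodic d f) (hf_smooth : ContDiff ℝ (m + 2 : ℕ) f)
    (hf_nonneg : ∀ x, 0 ≤ f x)
    (hfin : (globalMinimizersIco d f).Finite)
    (hhess : ∀ x ∈ globalMinimizersIco d f, ∀ v : Fin d → ℝ, v ≠ 0 →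
      0 < iteratedFDeriv ℝ 2 f x (fun _ => v)) :
    ∃ (Q : ℕ) (z : Fin Q → (Fin d → ℝ) → ℝ),
      (∀ j, ZdPeriodic d (z j) ∧ ContDiff ℝ (m : ℕ) (z j)) ∧
        ∀ x, f x = ∑ j, (z j x) ^ 2 := by
  set Z := {p ∈ globalMinimizersIco d f | f p = 0}
  have : Fintype Z := (hfin.subset (sep_subset _ _)).fintype
  choose χ h hχ hh hsum hone using fun p : Z =>
    have ⟨_, hr, _, hw, hfw⟩ := exists_sum_sq_on_ball_of_hessian_pos hf_smooth p.2.2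
      (IsLocalMin.fderiv_eq_zero (.of_forall p.2.1.2)) (hhess p p.2.1)
    exists_periodic_localization (n := m) hf_per hr hw hfw
  refine exists_periodic_sum_sq_of_localized hf_per (hf_smooth.of_le (by norm_cast; omega))
    hf_nonneg hχ hh hsum fun x hx => ?_
  have hfract : f (fun j => Int.fract (x j)) = 0 := (hf_per.apply_fract x).trans hx
  have hmem : (fun j => Int.fract (x j)) ∈ Z :=
    ⟨⟨fun j => ⟨Int.fract_nonneg _, Int.fract_lt_one _⟩, fun y => hfract ▸ hf_nonneg y⟩, hfract⟩
  exact ⟨⟨_, hmem⟩, by simpa only [Int.fract_add_floor] using hone ⟨_, hmem⟩ fun j => ⌊x j⌋⟩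

/-- Lemma 6 of the paper: a nonnegative, `1`-periodic, `(m+2)`-times
continuously differentiable function whose global minimizers in `[0,1)^d` are finitely
many with positive definite Hessian is a finite sum of squares of `1`-periodic `C^m`
functions. -/
theorem stmt_9 (d m : ℕ) (hd : 1 ≤ d) (f : (Fin d → ℝ) → ℝ)
    (hf_per : ZdPeriodic d f) (hf_smooth : ContDiff ℝ (m + 2 : ℕ) f)
    (hf_nonneg : ∀ x, 0 ≤ f x)
    (hfin : (globalMinimizersIco d f).Finite)
    (hhess : ∀ x ∈ globalMinimizersIco d f, ∀ v : Fin d → ℝ, v ≠ 0 →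
      0 < iteratedFDeriv ℝ 2 f x (fun _ => v)) :
    ∃ (Q : ℕ) (z : Fin Q → (Fin d → ℝ) → ℝ),
      (∀ j, ZdPeriodic d (z j) ∧ ContDiff ℝ (m : ℕ) (z j)) ∧
        ∀ x, f x = ∑ j, (z j x) ^ 2 :=
  stmt_9_general d m f hf_per hf_smooth hf_nonneg hfin hhess
end

section
/- For every real ρ with 0 < ρ < 1 and every integer k ∈ ℤ, ∑_{n∈ℤ} ρ^{|n| + |n-k|} = ρ^{|k|} · (|k| + (1 + ρ²)/(1 - ρ²)). -/
/-!
Both tails of the series are geometric: for `n < 0` and for `n > k ≥ 0` the exponent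
`|n| + |n - k|` runs through `k + 2, k + 4, …`, so each tail sums to `ρ^(k+2) / (1 - ρ²)`,
while each of the `k + 1` terms with `0 ≤ n ≤ k` equals `ρ^k`. The case `k < 0` follows
from the symmetry `n ↦ -n`.
-/

namespace AbsExponentSeries

variable {ρ : ℝ}

lemma hasSum_pow_add_two_mul_add_two (hρ : |ρ| < 1) (m : ℕ) :
    HasSum (fun j : ℕ => ρ ^ (m + 2 * j + 2)) (ρ ^ (m + 2) / (1 - ρ ^ 2)) := by
  have h := (hasSum_geometric_of_lt_one (sq_nonneg ρ)
    ((sq_lt_one_iff_abs_lt_one ρ).mpr hρ)).mul_left (ρ ^ (m + 2))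
  have e : (fun j : ℕ => ρ ^ (m + 2 * j + 2)) = fun j => ρ ^ (m + 2) * (ρ ^ 2) ^ j := by
    ext j
    ring
  rwa [e, div_eq_mul_inv]

lemma hasSum_nat_pow_add_natAbs_sub (hρ : |ρ| < 1) (m : ℕ) :
    HasSum (fun n : ℕ => ρ ^ (n + ((n : ℤ) - m).natAbs))
      ((m + 1) * ρ ^ m + ρ ^ (m + 2) / (1 - ρ ^ 2)) := by
  have const : ∀ n ∈ Finset.range (m + 1), ρ ^ (n + ((n : ℤ) - m).natAbs) = ρ ^ m := by
    intro n hn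
    rw [Finset.mem_range] at hn
    congr 1
    omega
  have head : ∑ n ∈ Finset.range (m + 1), ρ ^ (n + ((n : ℤ) - m).natAbs) = (m + 1) * ρ ^ m := by
    simp [Finset.sum_congr rfl const]
  rw [← head, add_comm, ← hasSum_nat_add_iff (m + 1)]
  exact (hasSum_pow_add_two_mul_add_two hρ m).congr_fun fun j => by
    congr 1
    omega

lemma hasSum_int_pow_natAbs_add_natAbs_sub_natCast (hρ : |ρ| < 1) (m : ℕ) :
    HasSum (fun n : ℤ => ρ ^ (n.natAbs + (n - m).natAbs))
      (ρ ^ m * ((m : ℝ) + (1 + ρ ^ 2) / (1 - ρ ^ 2))) := by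
  have hρ2 : 1 - ρ ^ 2 ≠ 0 := (sub_pos.mpr ((sq_lt_one_iff_abs_lt_one ρ).mpr hρ)).ne'
  have nonneg : HasSum (fun n : ℕ => ρ ^ ((n : ℤ).natAbs + ((n : ℤ) - m).natAbs))
      ((m + 1) * ρ ^ m + ρ ^ (m + 2) / (1 - ρ ^ 2)) := by
    simpa only [Int.natAbs_natCast] using hasSum_nat_pow_add_natAbs_sub hρ m
  have neg : HasSum (fun j : ℕ => ρ ^ ((-(j + 1) : ℤ).natAbs + (-(j + 1) - m : ℤ).natAbs))
      (ρ ^ (m + 2) / (1 - ρ ^ 2)) := by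
    refine (hasSum_pow_add_two_mul_add_two hρ m).congr_fun fun j => ?_
    congr 1
    omega
  convert HasSum.of_nat_of_neg_add_one
    (f := fun n : ℤ => ρ ^ (n.natAbs + (n - m).natAbs)) nonneg neg using 1
  field_simp
  ring

theorem hasSum_int_pow_natAbs_add_natAbs_sub (hρ : |ρ| < 1) (k : ℤ) :
    HasSum (fun n : ℤ => ρ ^ (n.natAbs + (n - k).natAbs))
      (ρ ^ k.natAbs * ((k.natAbs : ℝ) + (1 + ρ ^ 2) / (1 - ρ ^ 2))) := by
  have h := hasSum_int_pow_natAbs_add_natAbs_sub_natCast hρ k.natAbs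
  rcases Int.natAbs_eq k with hk | hk
  · rwa [← hk] at h
  · rw [← (Equiv.neg ℤ).hasSum_iff]
    refine h.congr_fun fun n => ?_
    simp only [Function.comp_apply, Equiv.neg_apply]
    congr 1
    omega

end AbsExponentSeries

/-- Appendix E of the paper: for `0 < ρ < 1` and `k ∈ ℤ`,
`∑_{n∈ℤ} ρ^{|n| + |n-k|} = ρ^{|k|} (|k| + (1+ρ²)/(1-ρ²))`. -/
theorem stmt_18 (ρ : ℝ) (hρ0 : 0 < ρ) (hρ1 : ρ < 1) (k : ℤ) :
    Summable (fun n : ℤ => ρ ^ (n.natAbs + (n - k).natAbs)) ∧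
      (∑' n : ℤ, ρ ^ (n.natAbs + (n - k).natAbs)) =
        ρ ^ k.natAbs * ((k.natAbs : ℝ) + (1 + ρ ^ 2) / (1 - ρ ^ 2)) := by
  have h := AbsExponentSeries.hasSum_int_pow_natAbs_add_natAbs_sub
    (abs_lt.mpr ⟨by linarith, hρ1⟩) k
  exact ⟨h.summable, h.tsum_eq⟩
end

section
/- Let ρ be a real number with 0 < ρ < 1 and define φ_ρ : ℝ → ℝ by φ_ρ(x) = (1 - ρ²)/(1 + ρ² - 2ρ·cos(2πx)). Then for all y, z ∈ ℝ and every integer k ∈ ℤ, |∫_0^1 e^{-2πikx} φ_ρ(x - y) φ_ρ(x - z) dx| ≤ ρ^{|k|} · (|k| + (1 + ρ²)/(1 - ρ²)). -/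
/-!
The Poisson kernel expands as `φ_ρ(x) = ∑ₙ ρ^|n| e^{2πinx}`, absolutely and uniformly in `x`, so
`φ_ρ(· - z)` has Fourier coefficients `ρ^|m| e^{-2πimz}`. Integrating the series of `φ_ρ(· - y)`
termwise against `e^{-2πikx} φ_ρ(x - z)` turns the `k`-th Fourier coefficient of the product into
the convolution `∑ₙ ρ^|n| e^{-2πiny} ρ^|k-n| e^{-2πi(k-n)z}`, of modulus at most
`∑ₙ ρ^(|n| + |k-n|)`. As `|n| + |k - n| = |k| + 2 dist(n, [0, k])`, that sum equals
`ρ^|k| (|k| + 1 + 2ρ²/(1 - ρ²))`.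
-/

open scoped BigOperators Real
open MeasureTheory

/-- The 1-dimensional Poisson-kernel feature function
`φ_ρ(x) = (1-ρ²)/(1+ρ²-2ρ cos(2πx))`. -/
noncomputable def phiRho (ρ : ℝ) (x : ℝ) : ℝ :=
  (1 - ρ ^ 2) / (1 + ρ ^ 2 - 2 * ρ * Real.cos (2 * π * x))

open Complex (I)

theorem hasSum_pow_natAbs_mul_zpow {r w : ℂ} (hr : ‖r‖ < 1) (hw : ‖w‖ = 1) :
    HasSum (fun n : ℤ => r ^ n.natAbs * w ^ n)
      ((1 - r ^ 2) / ((1 - r * w) * (1 - r * w⁻¹))) := by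
  have hrw : ‖r * w‖ < 1 := by simpa [hw] using hr
  have hrw' : ‖r * w⁻¹‖ < 1 := by simpa [hw] using hr
  have hw0 : w ≠ 0 := norm_ne_zero_iff.mp (by simp [hw])
  have h1 : 1 - r * w ≠ 0 := sub_ne_zero.mpr fun h => by simp [← h] at hrw
  have h2 : 1 - r * w⁻¹ ≠ 0 := sub_ne_zero.mpr fun h => by simp [← h] at hrw'
  have hnat : HasSum (fun n : ℕ => r ^ (n : ℤ).natAbs * w ^ (n : ℤ)) (1 - r * w)⁻¹ := by
    simpa [mul_pow] using hasSum_geometric_of_norm_lt_one hrw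
  have hneg : HasSum (fun n : ℕ => r ^ (-(n + 1 : ℤ)).natAbs * w ^ (-(n + 1 : ℤ)))
      ((1 - r * w⁻¹)⁻¹ * (r * w⁻¹)) := by
    refine ((hasSum_geometric_of_norm_lt_one hrw').mul_right (r * w⁻¹)).congr_fun fun n => ?_
    rw [zpow_neg, show (n + 1 : ℤ) = ((n + 1 : ℕ) : ℤ) by push_cast; rfl, zpow_natCast,
      Int.natAbs_neg, Int.natAbs_natCast, ← pow_succ, mul_pow, inv_pow]
  convert HasSum.of_nat_of_neg_add_one (f := fun n : ℤ => r ^ n.natAbs * w ^ n) hnat hneg using 1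
  have hu : w * w⁻¹ = 1 := mul_inv_cancel₀ hw0
  generalize w⁻¹ = u at hu h2 ⊢
  field_simp
  linear_combination r ^ 2 * hu

lemma phiRho_denom_pos {ρ : ℝ} (hρ : |ρ| < 1) (x : ℝ) :
    0 < 1 + ρ ^ 2 - 2 * ρ * Real.cos (2 * π * x) := by
  have : ρ * Real.cos (2 * π * x) ≤ |ρ| := (le_abs_self _).trans <| by
    rw [abs_mul]; exact mul_le_of_le_one_right (abs_nonneg ρ) (Real.abs_cos_le_one _)
  nlinarith [sq_abs ρ]

lemma continuous_phiRho {ρ : ℝ} (hρ : |ρ| < 1) : Continuous (phiRho ρ) :=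
  .div (by fun_prop) (by fun_prop) fun x => (phiRho_denom_pos hρ x).ne'

theorem hasSum_phiRho {ρ : ℝ} (hρ : |ρ| < 1) (x : ℝ) :
    HasSum (fun n : ℤ => (ρ : ℂ) ^ n.natAbs * Complex.exp (2 * π * I * n * x)) (phiRho ρ x) := by
  have hw : ‖Complex.exp (2 * π * I * x)‖ = 1 := by
    rw [show 2 * π * I * x = ((2 * π * x : ℝ) : ℂ) * I by push_cast; ring]
    exact Complex.norm_exp_ofReal_mul_I _
  have hcos : Complex.exp (2 * π * I * x) + (Complex.exp (2 * π * I * x))⁻¹ =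
      2 * Complex.cos (2 * π * x) := by
    rw [← Complex.exp_neg, Complex.two_cos]
    ring_nf
  set w := Complex.exp (2 * π * I * x)
  have hpow (n : ℤ) : Complex.exp (2 * π * I * n * x) = w ^ n := by
    rw [← Complex.exp_int_mul]; ring_nf
  have hden : (1 - ρ * w) * (1 - ρ * w⁻¹) =
      ((1 + ρ ^ 2 - 2 * ρ * Real.cos (2 * π * x) : ℝ) : ℂ) := by
    have : w * w⁻¹ = 1 := mul_inv_cancel₀ (Complex.exp_ne_zero _)
    push_cast
    linear_combination (ρ : ℂ) ^ 2 * this - (ρ : ℂ) * hcos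
  simp_rw [hpow]
  convert hasSum_pow_natAbs_mul_zpow (r := ρ) (by simpa using hρ) hw using 1
  rw [hden, phiRho]
  push_cast
  rfl

lemma exp_two_pi_I_mul_mul_exp_neg (n m : ℤ) (x : ℝ) :
    Complex.exp (2 * π * I * n * x) * Complex.exp (-(2 * π * I) * m * x) =
      Complex.exp (-(2 * π * I) * (m - n : ℤ) * x) := by
  rw [← Complex.exp_add]; push_cast; ring_nf

theorem integral_exp_neg_two_pi_I_int_mul (n : ℤ) :
    ∫ x in (0 : ℝ)..1, Complex.exp (-(2 * π * I) * n * x) = if n = 0 then 1 else 0 := by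
  split_ifs with hn
  · simp [hn]
  have hc : -(2 * π * I) * n ≠ 0 := by simp [hn, Real.pi_ne_zero]
  rw [integral_exp_mul_complex hc, Complex.ofReal_one, mul_one, Complex.ofReal_zero, mul_zero,
    Complex.exp_zero, show -(2 * π * I) * n = (-n : ℤ) * (2 * π * I) by push_cast; ring,
    Complex.exp_int_mul_two_pi_mul_I, sub_self, zero_div]

theorem hasSum_integral_fourierSeries_mul {c : ℤ → ℂ} (hc : Summable fun n => ‖c n‖)
    {f g : ℝ → ℂ} (hf : ∀ x : ℝ, HasSum (fun n => c n * Complex.exp (2 * π * I * n * x)) (f x))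
    (hg : IntervalIntegrable g volume 0 1) :
    HasSum (fun n => c n * ∫ x in (0 : ℝ)..1, Complex.exp (2 * π * I * n * x) * g x)
      (∫ x in (0 : ℝ)..1, f x * g x) := by
  simp_rw [← intervalIntegral.integral_const_mul, ← mul_assoc]
  refine intervalIntegral.hasSum_integral_of_dominated_convergence (fun n x => ‖c n‖ * ‖g x‖)
    (fun n => ?_) (fun n => ae_of_all _ fun x _ => ?_) (ae_of_all _ fun x _ => hc.mul_right _) ?_
    (ae_of_all _ fun x _ => (hf x).mul_right (g x))
  · exact ((hg.continuousOn_mul (by fun_prop : Continuous fun x : ℝ =>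
      c n * Complex.exp (2 * π * I * n * x)).continuousOn)).def'.aestronglyMeasurable
  · simp [Complex.norm_exp]
  · simp_rw [tsum_mul_right]
    exact hg.norm.const_mul _

theorem integral_exp_mul_eq_of_hasSum_fourierSeries {c : ℤ → ℂ} (hc : Summable fun n => ‖c n‖)
    {f : ℝ → ℂ} (hf : ∀ x : ℝ, HasSum (fun n => c n * Complex.exp (2 * π * I * n * x)) (f x))
    (m : ℤ) :
    ∫ x in (0 : ℝ)..1, Complex.exp (-(2 * π * I) * m * x) * f x = c m := by
  have h := hasSum_integral_fourierSeries_mul hc hf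
    ((by fun_prop : Continuous fun x : ℝ => Complex.exp (-(2 * π * I) * m * x)).intervalIntegrable
      0 1)
  simp_rw [exp_two_pi_I_mul_mul_exp_neg, integral_exp_neg_two_pi_I_int_mul, sub_eq_zero,
    mul_ite, mul_one, mul_zero, @eq_comm _ m] at h
  have hm := hasSum_single (f := fun n => if n = m then c n else 0) m fun n hn => if_neg hn
  simpa only [mul_comm, if_pos] using h.unique hm

noncomputable def phiRhoCoeff (ρ z : ℝ) (n : ℤ) : ℂ :=
  ρ ^ n.natAbs * Complex.exp (-(2 * π * I) * n * z)

lemma norm_phiRhoCoeff (ρ z : ℝ) (n : ℤ) : ‖phiRhoCoeff ρ z n‖ = |ρ| ^ n.natAbs := by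
  simp [phiRhoCoeff, Complex.norm_exp]

lemma summable_norm_phiRhoCoeff {ρ : ℝ} (hρ : |ρ| < 1) (z : ℝ) :
    Summable fun n => ‖phiRhoCoeff ρ z n‖ := by
  simp_rw [norm_phiRhoCoeff]
  have := summable_geometric_of_lt_one (abs_nonneg ρ) hρ
  exact .of_nat_of_neg (by simpa using this) (by simpa using this)

theorem hasSum_phiRhoCoeff {ρ : ℝ} (hρ : |ρ| < 1) (z x : ℝ) :
    HasSum (fun n => phiRhoCoeff ρ z n * Complex.exp (2 * π * I * n * x)) (phiRho ρ (x - z)) := by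
  refine (hasSum_phiRho hρ (x - z)).congr_fun fun n => ?_
  rw [phiRhoCoeff, mul_assoc, ← Complex.exp_add]
  push_cast
  ring_nf

theorem integral_exp_mul_phiRho_sub {ρ : ℝ} (hρ : |ρ| < 1) (z : ℝ) (m : ℤ) :
    ∫ x in (0 : ℝ)..1, Complex.exp (-(2 * π * I) * m * x) * phiRho ρ (x - z) = phiRhoCoeff ρ z m :=
  integral_exp_mul_eq_of_hasSum_fourierSeries (summable_norm_phiRhoCoeff hρ z)
    (hasSum_phiRhoCoeff hρ z) m

theorem hasSum_integral_exp_mul_phiRho_mul_phiRho {ρ : ℝ} (hρ : |ρ| < 1) (y z : ℝ) (k : ℤ) :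
    HasSum (fun n => phiRhoCoeff ρ y n * phiRhoCoeff ρ z (k - n))
      (∫ x in (0 : ℝ)..1,
        Complex.exp (-(2 * π * I) * k * x) * phiRho ρ (x - y) * phiRho ρ (x - z)) := by
  have hcont := continuous_phiRho hρ
  have h := hasSum_integral_fourierSeries_mul (summable_norm_phiRhoCoeff hρ y)
    (hasSum_phiRhoCoeff hρ y) (g := fun x => Complex.exp (-(2 * π * I) * k * x) * phiRho ρ (x - z))
    ((by fun_prop : Continuous fun x : ℝ =>
      Complex.exp (-(2 * π * I) * k * x) * phiRho ρ (x - z)).intervalIntegrable 0 1)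
  simp_rw [← mul_assoc, exp_two_pi_I_mul_mul_exp_neg, integral_exp_mul_phiRho_sub hρ] at h
  simpa only [mul_comm, mul_assoc] using h

theorem hasSum_pow_natAbs_add_natAbs_sub_natCast {r : ℝ} (hr : |r| < 1) (K : ℕ) :
    HasSum (fun n : ℤ => r ^ (n.natAbs + ((K : ℤ) - n).natAbs))
      (r ^ K * (K + (1 + r ^ 2) / (1 - r ^ 2))) := by
  have hr2 : r ^ 2 < 1 := by nlinarith [sq_abs r, abs_nonneg r]
  have htail : HasSum (fun m : ℕ => r ^ (K + 2 * (m + 1))) (r ^ K * r ^ 2 * (1 - r ^ 2)⁻¹) :=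
    ((hasSum_geometric_of_lt_one (sq_nonneg r) hr2).mul_left (r ^ K * r ^ 2)).congr_fun
      fun m => by ring
  have hnat : HasSum (fun n : ℕ => r ^ ((n : ℤ).natAbs + ((K : ℤ) - n).natAbs))
      ((K + 1) * r ^ K + r ^ K * r ^ 2 * (1 - r ^ 2)⁻¹) := by
    refine (hasSum_nat_add_iff' (K + 1)).mp ?_
    have hhead : ∑ i ∈ Finset.range (K + 1), r ^ ((i : ℤ).natAbs + ((K : ℤ) - i).natAbs) =
        (K + 1) * r ^ K := by
      rw [Finset.sum_congr rfl (g := fun _ => r ^ K) fun i hi => by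
        rw [Finset.mem_range] at hi; congr 1; omega]
      simp
    rw [hhead, add_sub_cancel_left]
    exact htail.congr_fun fun m => by congr 1; omega
  have hneg : HasSum (fun m : ℕ => r ^ ((-(m + 1 : ℤ)).natAbs + ((K : ℤ) - -(m + 1 : ℤ)).natAbs))
      (r ^ K * r ^ 2 * (1 - r ^ 2)⁻¹) :=
    htail.congr_fun fun m => by congr 1; omega
  convert HasSum.of_nat_of_neg_add_one
    (f := fun n : ℤ => r ^ (n.natAbs + ((K : ℤ) - n).natAbs)) hnat hneg using 1
  have : 1 - r ^ 2 ≠ 0 := (sub_pos.mpr hr2).ne'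
  field_simp
  ring

theorem hasSum_pow_natAbs_add_natAbs_sub {r : ℝ} (hr : |r| < 1) (k : ℤ) :
    HasSum (fun n : ℤ => r ^ (n.natAbs + (k - n).natAbs))
      (r ^ k.natAbs * (k.natAbs + (1 + r ^ 2) / (1 - r ^ 2))) := by
  obtain ⟨K, rfl | rfl⟩ := Int.eq_nat_or_neg k
  · simpa using hasSum_pow_natAbs_add_natAbs_sub_natCast hr K
  · rw [Int.natAbs_neg, Int.natAbs_natCast]
    refine ((Equiv.neg ℤ).hasSum_iff.mpr (hasSum_pow_natAbs_add_natAbs_sub_natCast hr K)).congr_fun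
      fun n => ?_
    simp only [Function.comp_apply, Equiv.neg_apply]
    congr 1
    omega

/-- Appendix E of the paper: for `0 < ρ < 1`, all `y, z ∈ ℝ` and `k ∈ ℤ`,
`|∫_0^1 e^{-2πikx} φ_ρ(x-y) φ_ρ(x-z) dx| ≤ ρ^{|k|} (|k| + (1+ρ²)/(1-ρ²))`. -/
theorem stmt_19 (ρ : ℝ) (hρ0 : 0 < ρ) (hρ1 : ρ < 1) (y z : ℝ) (k : ℤ) :
    ‖∫ x in (0 : ℝ)..1,
        Complex.exp (-(2 * (π : ℂ) * Complex.I) * (k : ℂ) * (x : ℂ)) *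
          ((phiRho ρ (x - y) : ℝ) : ℂ) * ((phiRho ρ (x - z) : ℝ) : ℂ)‖ ≤
      ρ ^ k.natAbs * ((k.natAbs : ℝ) + (1 + ρ ^ 2) / (1 - ρ ^ 2)) := by
  have hρ : |ρ| < 1 := by rwa [abs_of_pos hρ0]
  refine (hasSum_integral_exp_mul_phiRho_mul_phiRho hρ y z k).norm_le_of_bounded
    (hasSum_pow_natAbs_add_natAbs_sub hρ k) fun n => ?_
  rw [norm_mul, norm_phiRhoCoeff, norm_phiRhoCoeff, abs_of_pos hρ0, pow_add]
end
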